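/- arXiv:2405.15200 — 4 statements merged into one kernel-verified Lean document; each statement's English description precedes it below -/
import Mathlib

section
/- Let λ > 0, L > 0, let X_1, …, X_T ∈ ℝ^d satisfy ‖X_t‖ ≤ L for all t, and set V_0 = λ·I_d and V_t = V_{t−1} + X_t X_tᵀ. Then for every constant m with 0 < m ≤ 2, the number of time steps at which the elliptical potential is large satisfies Σ_{t=1}^T 1{ ‖X_t‖²_{V_{t−1}^{−1}} ≥ m } ≤ (6d/m)·log(1 + 2L²/(λm)). -/
/-!
Let `S` be the set of rounds whose potential is at least `m`, and `W = λI + ∑_{s ∈ S} X_s X_sᵀ`.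
Dropping the rounds outside `S` only shrinks the design matrices, so every `s ∈ S` still has
potential at least `m` with respect to `S` alone, and the matrix determinant lemma gives
`λ^d (1 + m)^|S| ≤ det W`. By AM-GM on the eigenvalues, `det W ≤ (tr W / d)^d ≤ (λ + |S| L² / d)^d`.
Hence `|S| log(1 + m) ≤ d log(1 + |S| L² / (dλ))`, a self-bounding inequality in `|S|` which,
with `log(1 + m) ≥ m / 2` for `m ≤ 2`, solves to the stated bound.
-/

open Matrix Finset
open scoped Classical

/-- Euclidean norm of a vector in `ℝ^d`. -/
noncomputable def enorm2 {d : ℕ} (v : Fin d → ℝ) : ℝ := Real.sqrt (v ⬝ᵥ v)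

open scoped MatrixOrder

namespace Matrix

variable {n : Type*} [Fintype n]

theorem posSemidef_vecMulVec_self (x : n → ℝ) : (vecMulVec x x).PosSemidef := by
  simpa using posSemidef_vecMulVec_self_star x

theorem PosDef.add_sum_vecMulVec {ι : Type*} {A : Matrix n n ℝ} (hA : A.PosDef)
    (X : ι → n → ℝ) (S : Finset ι) : (A + ∑ s ∈ S, vecMulVec (X s) (X s)).PosDef :=
  hA.add_posSemidef (posSemidef_sum S fun s _ => posSemidef_vecMulVec_self (X s))

variable [DecidableEq n]

theorem det_add_vecMulVec {R : Type*} [CommRing R] {A : Matrix n n R} (hA : IsUnit A.det)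
    (u v : n → R) : (A + vecMulVec u v).det = A.det * (1 + v ⬝ᵥ A⁻¹ *ᵥ u) := by
  rw [vecMulVec_eq Unit, det_add_replicateCol_mul_replicateRow hA, det_unique (1 + _),
    add_apply, one_apply_eq, Matrix.mul_assoc, ← replicateCol_mulVec,
    replicateRow_mul_replicateCol_apply]

/-- Tight at `y = A⁻¹ x`: this is the variational formula for `xᵀ A⁻¹ x`. -/
theorem PosDef.two_mul_dotProduct_sub_le {A : Matrix n n ℝ} (hA : A.PosDef) (x y : n → ℝ) :
    2 * (y ⬝ᵥ x) - y ⬝ᵥ A *ᵥ y ≤ x ⬝ᵥ A⁻¹ *ᵥ x := by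
  set w := A⁻¹ *ᵥ x
  have hAw : A *ᵥ w = x := by
    simp [w, mulVec_mulVec, mul_nonsing_inv _ hA.det_pos.ne'.isUnit]
  have hsymm : w ⬝ᵥ A *ᵥ y = y ⬝ᵥ x := by
    have hT : Aᵀ = A := by simpa using hA.isHermitian.eq
    rw [dotProduct_mulVec, ← mulVec_transpose, hT, hAw, dotProduct_comm]
  have hnonneg := hA.posSemidef.dotProduct_mulVec_nonneg (y - w)
  simp only [star_trivial, mulVec_sub, dotProduct_sub, sub_dotProduct, hAw, hsymm] at hnonneg
  rw [dotProduct_comm w x] at hnonneg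
  linarith

theorem PosDef.dotProduct_inv_mulVec_antitone {A B : Matrix n n ℝ} (hA : A.PosDef)
    (hAB : A ≤ B) (x : n → ℝ) : x ⬝ᵥ B⁻¹ *ᵥ x ≤ x ⬝ᵥ A⁻¹ *ᵥ x := by
  have hB : B.PosDef := by simpa using hA.add_posSemidef (le_iff.mp hAB)
  set y := B⁻¹ *ᵥ x
  have hBy : B *ᵥ y = x := by
    simp [y, mulVec_mulVec, mul_nonsing_inv _ hB.det_pos.ne'.isUnit]
  have hyAy : y ⬝ᵥ A *ᵥ y ≤ y ⬝ᵥ B *ᵥ y := by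
    have := (le_iff.mp hAB).dotProduct_mulVec_nonneg y
    simp only [star_trivial, sub_mulVec, dotProduct_sub] at this
    linarith
  have hvar := hA.two_mul_dotProduct_sub_le x y
  rw [hBy, dotProduct_comm y x] at hyAy
  rw [dotProduct_comm y x] at hvar
  linarith

theorem PosSemidef.det_le_trace_div_card_pow {A : Matrix n n ℝ} (hA : A.PosSemidef) :
    A.det ≤ (A.trace / Fintype.card n) ^ Fintype.card n := by
  rcases isEmpty_or_nonempty n with hn | hn
  · simp
  set d := Fintype.card n
  set μ := hA.isHermitian.eigenvalues
  have hμ : ∀ i, 0 ≤ μ i := hA.eigenvalues_nonneg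
  have hd : (d : ℝ) ≠ 0 := by positivity
  have hAM : ∏ i, μ i ^ (d : ℝ)⁻¹ ≤ ∑ i, (d : ℝ)⁻¹ * μ i :=
    Real.geom_mean_le_arith_mean_weighted _ _ _ (fun _ _ => by positivity)
      (by simp [d, hd]) (fun i _ => hμ i)
  calc A.det = (∏ i, μ i ^ (d : ℝ)⁻¹) ^ d := by
        rw [hA.isHermitian.det_eq_prod_eigenvalues, ← Finset.prod_pow]
        refine Finset.prod_congr rfl fun i _ => ?_
        rw [← Real.rpow_natCast, ← Real.rpow_mul (hμ i), inv_mul_cancel₀ hd, Real.rpow_one]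
        rfl
    _ ≤ (∑ i, (d : ℝ)⁻¹ * μ i) ^ d := by
        gcongr
        exact Finset.prod_nonneg fun i _ => Real.rpow_nonneg (hμ i) _
    _ = (A.trace / d) ^ d := by
        rw [← Finset.mul_sum, hA.isHermitian.trace_eq_sum_eigenvalues, inv_mul_eq_div]
        simp [μ]

theorem PosDef.det_mul_one_add_pow_card_le {ι : Type*} [LinearOrder ι] {A : Matrix n n ℝ}
    (hA : A.PosDef) (X : ι → n → ℝ) {m : ℝ} (hm : 0 ≤ m) (S : Finset ι)
    (hS : ∀ s ∈ S, m ≤ X s ⬝ᵥ (A + ∑ t ∈ S with t < s, vecMulVec (X t) (X t))⁻¹ *ᵥ X s) :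
    A.det * (1 + m) ^ #S ≤ (A + ∑ s ∈ S, vecMulVec (X s) (X s)).det := by
  induction S using Finset.induction_on_max with
  | empty => simp
  | insert a S hlt ih =>
    have ha : a ∉ S := fun h => lt_irrefl a (hlt a h)
    have hbelow_a : {t ∈ insert a S | t < a} = S := by
      rw [filter_insert, if_neg (lt_irrefl a), filter_true_of_mem hlt]
    have hbelow : ∀ s ∈ S, {t ∈ insert a S | t < s} = {t ∈ S | t < s} := fun s hs => by
      rw [filter_insert, if_neg (not_lt.2 (hlt s hs).le)]
    have hW := hA.add_sum_vecMulVec X S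
    have hm_a := hS a (mem_insert_self a S)
    rw [hbelow_a] at hm_a
    rw [card_insert_of_notMem ha, sum_insert ha, add_left_comm, add_comm (vecMulVec _ _),
      det_add_vecMulVec hW.det_pos.ne'.isUnit, pow_succ, ← mul_assoc]
    refine mul_le_mul (ih fun s hs => ?_) (by linarith) (by linarith) hW.det_pos.le
    rw [← hbelow s hs]
    exact hS s (mem_insert_of_mem hs)

theorem one_add_pow_card_le_of_le_potential [Nonempty n] {ι : Type*} [LinearOrder ι]
    {lam b m : ℝ} (hlam : 0 < lam) (hm : 0 ≤ m) (X : ι → n → ℝ) (S : Finset ι)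
    (hX : ∀ s ∈ S, X s ⬝ᵥ X s ≤ b)
    (hS : ∀ s ∈ S, m ≤ X s ⬝ᵥ (lam • 1 + ∑ t ∈ S with t < s, vecMulVec (X t) (X t))⁻¹ *ᵥ X s) :
    (1 + m) ^ #S ≤ (1 + #S * b / (Fintype.card n * lam)) ^ Fintype.card n := by
  set d := Fintype.card n
  set W := lam • (1 : Matrix n n ℝ) + ∑ s ∈ S, vecMulVec (X s) (X s)
  have hA : (lam • (1 : Matrix n n ℝ)).PosDef := PosDef.one.smul hlam
  have hW : W.PosDef := hA.add_sum_vecMulVec X S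
  have hd : (0 : ℝ) < d := by simp [d, Fintype.card_pos]
  have hlower : lam ^ d * (1 + m) ^ #S ≤ W.det := by
    simpa [det_smul] using hA.det_mul_one_add_pow_card_le X hm S hS
  have htrace : W.trace ≤ d * (lam * (1 + #S * b / (d * lam))) := calc
    W.trace = d * lam + ∑ s ∈ S, X s ⬝ᵥ X s := by
      simp [W, d, trace_sum, trace_vecMulVec, mul_comm]
    _ ≤ d * lam + #S * b := by
      simpa using sum_le_card_nsmul S _ b hX
    _ = d * (lam * (1 + #S * b / (d * lam))) := by
      field_simp
  have hupper : W.det ≤ lam ^ d * (1 + #S * b / (d * lam)) ^ d := calc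
    W.det ≤ (W.trace / d) ^ d := hW.posSemidef.det_le_trace_div_card_pow
    _ ≤ (lam * (1 + #S * b / (d * lam))) ^ d := by
      gcongr
      · exact div_nonneg hW.posSemidef.trace_nonneg (Nat.cast_nonneg d)
      · rwa [div_le_iff₀' (by positivity)]
    _ = lam ^ d * (1 + #S * b / (d * lam)) ^ d := mul_pow _ _ _
  exact le_of_mul_le_mul_left (hlower.trans hupper) (by positivity)

end Matrix

namespace Real

theorem le_three_mul_log_one_add_of_le_log {u r : ℝ} (hu : 0 ≤ u) (hr : 1 ≤ r)
    (h : u ≤ log (1 + u * r)) : u ≤ 3 * log (1 + r) := by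
  have hsplit : log (1 + u * r) ≤ log (1 + u) + log (1 + r) := by
    rw [← log_mul (by positivity) (by positivity)]
    exact log_le_log (by positivity) (by nlinarith)
  -- tangent line of `log` at `2`
  have htangent : log (1 + u) ≤ log 2 + (u - 1) / 2 := by
    have := log_le_sub_one_of_pos (x := (1 + u) / 2) (by positivity)
    rw [log_div (by positivity) two_ne_zero] at this
    linarith
  have hlog2 : log 2 ≤ log (1 + r) := log_le_log two_pos (by linarith)
  have hlog2_le_one : log 2 ≤ 1 := by linarith [log_le_sub_one_of_pos (x := 2) two_pos]
  linarith

theorem half_le_log_one_add {m : ℝ} (hm0 : 0 ≤ m) (hm2 : m ≤ 2) : m / 2 ≤ log (1 + m) := by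
  refine le_trans ?_ (le_log_one_add_of_nonneg hm0)
  rw [le_div_iff₀ (by positivity)]
  nlinarith

theorem natCast_le_mul_log_of_one_add_pow_le {k d : ℕ} {m b lam : ℝ} (hd : 0 < d)
    (hm0 : 0 < m) (hm2 : m ≤ 2) (hlam : 0 < lam) (hb : 0 ≤ b)
    (h : (1 + m) ^ k ≤ (1 + k * b / (d * lam)) ^ d) :
    (k : ℝ) ≤ 6 * d / m * log (1 + 2 * b / (lam * m)) := by
  rcases Nat.eq_zero_or_pos k with rfl | hk
  · have := log_nonneg (le_add_of_nonneg_right (by positivity : 0 ≤ 2 * b / (lam * m)))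
    rw [Nat.cast_zero]
    positivity
  set K : ℝ := (k : ℝ)
  set D : ℝ := (d : ℝ)
  have hK : 0 < K := by positivity
  have hD : 0 < D := by positivity
  set a := b / lam
  have hlog : K * log (1 + m) ≤ D * log (1 + K * a / D) := by
    have := log_le_log (by positivity) h
    rwa [log_pow, log_pow, show K * b / (D * lam) = K * a / D by ring] at this
  have hm := half_le_log_one_add hm0.le hm2
  have ha : m / 2 ≤ a := by
    have hlog_le := log_le_sub_one_of_pos (x := 1 + K * a / D) (by positivity)
    have : K * (m / 2) ≤ K * a := calc
      K * (m / 2) ≤ D * log (1 + K * a / D) := by nlinarith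
      _ ≤ D * (K * a / D) := by gcongr; linarith
      _ = K * a := by field_simp
    exact le_of_mul_le_mul_left this hK
  set u := K * m / (2 * D) with hu_def
  set r := 2 * a / m with hr_def
  have hr : 1 ≤ r := by rw [hr_def, le_div_iff₀ hm0]; linarith
  have hu : u ≤ log (1 + u * r) := by
    have hur : K * a / D = u * r := by rw [hu_def, hr_def]; field_simp
    have : D * u ≤ D * log (1 + u * r) := calc
      D * u = K * (m / 2) := by rw [hu_def]; field_simp
      _ ≤ D * log (1 + u * r) := by rw [← hur]; nlinarith
    exact le_of_mul_le_mul_left this hD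
  have hbound := le_three_mul_log_one_add_of_le_log (by positivity) hr hu
  rw [show 2 * b / (lam * m) = r by ring]
  calc K = 2 * D / m * u := by rw [hu_def]; field_simp
    _ ≤ 2 * D / m * (3 * log (1 + r)) := by gcongr
    _ = 6 * D / m * log (1 + r) := by ring

end Real

theorem elliptical_potential_count_general (d T : ℕ) (lam L : ℝ) (hlam : 0 < lam)
    (X : ℕ → Fin d → ℝ) (hX : ∀ t ∈ Finset.Icc 1 T, enorm2 (X t) ≤ L)
    (V : ℕ → Matrix (Fin d) (Fin d) ℝ)
    (hV0 : V 0 = lam • (1 : Matrix (Fin d) (Fin d) ℝ))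
    (hV : ∀ t, V (t + 1) = V t + Matrix.vecMulVec (X (t + 1)) (X (t + 1)))
    (m : ℝ) (hm0 : 0 < m) (hm2 : m ≤ 2) :
    ∑ t ∈ Finset.Icc 1 T,
        (if m ≤ X t ⬝ᵥ (V (t - 1))⁻¹.mulVec (X t) then (1 : ℝ) else 0)
      ≤ (6 * d / m) * Real.log (1 + 2 * L ^ 2 / (lam * m)) := by
  rcases Nat.eq_zero_or_pos d with rfl | hd
  · simp [hm0.not_ge]
  have hV_eq : ∀ t, V t = lam • 1 + ∑ s ∈ Icc 1 t, vecMulVec (X s) (X s) := by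
    intro t
    induction t with
    | zero => simp [hV0]
    | succ t ih => rw [hV, ih, sum_Icc_succ_top (by omega), add_assoc]
  set S := {t ∈ Icc 1 T | m ≤ X t ⬝ᵥ (V (t - 1))⁻¹ *ᵥ X t}
  have hpot : ∀ s ∈ S,
      m ≤ X s ⬝ᵥ (lam • 1 + ∑ t ∈ S with t < s, vecMulVec (X t) (X t))⁻¹ *ᵥ X s := by
    intro s hs
    rw [mem_filter] at hs
    have hW := (PosDef.one.smul hlam).add_sum_vecMulVec X {t ∈ S | t < s}
    refine hs.2.trans (hW.dotProduct_inv_mulVec_antitone ?_ _)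
    rw [hV_eq]
    refine add_le_add le_rfl (sum_le_sum_of_subset_of_nonneg (fun t ht => ?_)
      fun t _ _ => (posSemidef_vecMulVec_self (X t)).nonneg)
    simp only [mem_filter, mem_Icc, S] at ht ⊢
    omega
  have hnorm : ∀ s ∈ S, X s ⬝ᵥ X s ≤ L ^ 2 := fun s hs =>
    (Real.sqrt_le_iff.mp (hX s (mem_filter.mp hs).1)).2
  have : Nonempty (Fin d) := ⟨⟨0, hd⟩⟩
  rw [sum_boole]
  simpa using Real.natCast_le_mul_log_of_one_add_pow_le hd hm0 hm2 hlam (sq_nonneg L)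
    (by simpa using one_add_pow_card_le_of_le_potential hlam hm0.le X S hnorm hpot)

/-- **Elliptical potential count lemma.** Let `λ, L > 0`, `‖X_t‖ ≤ L` for all `t ∈ [1, T]`,
`V_0 = λ·I_d` and `V_t = V_{t−1} + X_t X_tᵀ`. Then for every `0 < m ≤ 2`,
`Σ_{t=1}^T 1{‖X_t‖²_{V_{t−1}⁻¹} ≥ m} ≤ (6d/m)·log(1 + 2L²/(λm))`. -/
theorem elliptical_potential_count (d T : ℕ) (lam L : ℝ) (hlam : 0 < lam) (hL : 0 < L)
    (X : ℕ → Fin d → ℝ) (hX : ∀ t ∈ Finset.Icc 1 T, enorm2 (X t) ≤ L)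
    (V : ℕ → Matrix (Fin d) (Fin d) ℝ)
    (hV0 : V 0 = lam • (1 : Matrix (Fin d) (Fin d) ℝ))
    (hV : ∀ t, V (t + 1) = V t + Matrix.vecMulVec (X (t + 1)) (X (t + 1)))
    (m : ℝ) (hm0 : 0 < m) (hm2 : m ≤ 2) :
    ∑ t ∈ Finset.Icc 1 T,
        (if m ≤ X t ⬝ᵥ (V (t - 1))⁻¹.mulVec (X t) then (1 : ℝ) else 0)
      ≤ (6 * d / m) * Real.log (1 + 2 * L ^ 2 / (lam * m)) :=
  elliptical_potential_count_general d T lam L hlam X hX V hV0 hV m hm0 hm2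
end

section
/- Deterministic peeling bound with a logarithmic factor. Let d ≥ 1, T ≥ 3, λ > 0, L > 0, let X_1, …, X_T ∈ ℝ^d satisfy ‖X_t‖ ≤ L, and set V_0 = λ·I_d, V_t = V_{t−1} + X_t X_tᵀ. Let Δ_1, …, Δ_T ∈ [0,1] and let β_0 ≤ β_1 ≤ … ≤ β_{T−1} be real numbers with β_0 ≥ 1; write β := β_{T−1}. Then for every Γ ∈ (0,1): Σ_{t=1}^T Δ_t·1{ ‖X_t‖²_{V_{t−1}^{−1}} ≥ Δ_t²/(β_{t−1}·log T) } ≤ T·Γ + (48·d·β·log T/Γ)·log(1 + 8·L²·β·log T/(λ·Γ²)). -/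
/-!
Rounds with `Δ_t ≤ Γ` contribute at most `T Γ`. In every other counted round the indicator
forces the elliptical potential `‖X_t‖²_{V_{t-1}⁻¹}` to be at least `Δ_t² / κ` with
`κ = β log T`, so on the dyadic level `Δ_t > 2⁻ˡ` it is at least `4⁻ˡ / κ`. Each such round
multiplies the determinant of the design matrix built from those rounds alone by at least
`1 + 4⁻ˡ / κ`, while `det ≤ (trace / d)ᵈ` grows only polynomially; hence level `l` holds
`O(d κ 4ˡ log(1 + L² κ / (λ Γ²)))` rounds. Each contributes at most `2¹⁻ˡ`, and summing over
`l ≤ log₂ (2 / Γ)` gives the second term.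
-/

open Matrix Finset
open scoped Classical

theorem Real.prod_le_arith_mean_pow {ι : Type*} [Fintype ι] [Nonempty ι] {z : ι → ℝ}
    (hz : ∀ i, 0 ≤ z i) : ∏ i, z i ≤ ((∑ i, z i) / Fintype.card ι) ^ Fintype.card ι := by
  have hcard : (0 : ℝ) < Fintype.card ι := by exact_mod_cast Fintype.card_pos
  have hamgm := Real.geom_mean_le_arith_mean_weighted univ (fun _ ↦ (Fintype.card ι : ℝ)⁻¹) z
    (fun _ _ ↦ by positivity) (by simp [hcard.ne']) (fun i _ ↦ hz i)
  rw [← mul_sum, inv_mul_eq_div, Real.finsetProd_rpow _ _ (fun i _ ↦ hz i)] at hamgm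
  calc ∏ i, z i = ((∏ i, z i) ^ (Fintype.card ι : ℝ)⁻¹) ^ Fintype.card ι := by
        rw [← Real.rpow_natCast, ← Real.rpow_mul (prod_nonneg fun i _ ↦ hz i),
          inv_mul_cancel₀ hcard.ne', Real.rpow_one]
    _ ≤ _ := by gcongr; exact Real.rpow_nonneg (prod_nonneg fun i _ ↦ hz i) _

theorem Real.le_three_mul_log_one_add_of_le_log_s15 {r c : ℝ} (hr : 0 ≤ r) (hc : 2 ≤ c)
    (h : r ≤ Real.log (1 + r * c)) : r ≤ 3 * Real.log (1 + c) := by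
  have hsplit : Real.log (1 + r * c) ≤ Real.log (1 + r) + Real.log (1 + c) := by
    rw [← Real.log_mul (by positivity) (by positivity)]
    exact Real.log_le_log (by positivity) (by nlinarith)
  -- `log (1 + r) = log 3 + log ((1 + r) / 3) ≤ log 3 + (1 + r) / 3 - 1`
  have hlin : Real.log (1 + r) ≤ Real.log 3 + (r - 2) / 3 := by
    have := Real.log_le_sub_one_of_pos (show 0 < (1 + r) / 3 by positivity)
    rw [Real.log_div (by positivity) (by norm_num)] at this
    linarith
  have h3 : Real.log 3 ≤ Real.log (1 + c) := Real.log_le_log (by norm_num) (by linarith)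
  linarith

theorem le_two_mul_sum_dyadic {f : ℝ} (N : ℕ) (hfN : 2⁻¹ ^ N < f) (hf1 : f ≤ 1) :
    f ≤ 2 * ∑ l ∈ Icc 1 N, if 2⁻¹ ^ l < f then (2⁻¹ : ℝ) ^ l else 0 := by
  induction N with
  | zero => exact absurd hf1 (by simpa using hfN)
  | succ N ih =>
    rw [sum_Icc_succ_top (by omega)]
    have hterm : (0 : ℝ) ≤ if 2⁻¹ ^ (N + 1) < f then 2⁻¹ ^ (N + 1) else 0 := by
      split_ifs
      all_goals positivity
    by_cases hN : 2⁻¹ ^ N < f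
    · linarith [ih hN]
    · have hsum : (0 : ℝ) ≤ ∑ l ∈ Icc 1 N, if 2⁻¹ ^ l < f then (2⁻¹ : ℝ) ^ l else 0 :=
        sum_nonneg fun l _ ↦ by split_ifs <;> positivity
      rw [if_pos hfN, pow_succ] at *
      linarith [not_lt.mp hN]

theorem sum_Icc_two_pow_le (N : ℕ) : ∑ l ∈ Icc 1 N, (2 : ℝ) ^ l ≤ 2 ^ (N + 1) := by
  calc ∑ l ∈ Icc 1 N, (2 : ℝ) ^ l ≤ ∑ l ∈ range (N + 1), (2 : ℝ) ^ l :=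
        sum_le_sum_of_subset_of_nonneg (fun l hl ↦ by simp at hl ⊢; omega)
          fun _ _ _ ↦ by positivity
    _ ≤ 2 ^ (N + 1) := by rw [geom_sum_eq (by norm_num)]; norm_num

theorem sum_le_of_card_dyadic_superlevel_le {ι : Type*} (s : Finset ι) (f : ι → ℝ) (N : ℕ)
    {C : ℝ} (hC : 0 ≤ C) (hf : ∀ i ∈ s, 2⁻¹ ^ N < f i ∧ f i ≤ 1)
    (hcard : ∀ l ∈ Icc 1 N, (#(s.filter (2⁻¹ ^ l < f ·)) : ℝ) ≤ C * 4 ^ l) :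
    ∑ i ∈ s, f i ≤ 4 * C * 2 ^ N := by
  calc ∑ i ∈ s, f i
      ≤ ∑ i ∈ s, 2 * ∑ l ∈ Icc 1 N, if 2⁻¹ ^ l < f i then (2⁻¹ : ℝ) ^ l else 0 :=
        sum_le_sum fun i hi ↦ le_two_mul_sum_dyadic N (hf i hi).1 (hf i hi).2
    _ = 2 * ∑ l ∈ Icc 1 N, (#(s.filter (2⁻¹ ^ l < f ·)) : ℝ) * 2⁻¹ ^ l := by
        rw [← mul_sum, sum_comm]
        simp only [← sum_filter, sum_const, nsmul_eq_mul]
    _ ≤ 2 * ∑ l ∈ Icc 1 N, C * 4 ^ l * 2⁻¹ ^ l := by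
        gcongr with l hl
        exact hcard l hl
    _ = 2 * C * ∑ l ∈ Icc 1 N, (2 : ℝ) ^ l := by
        simp only [mul_sum, mul_assoc, ← mul_pow]
        norm_num
    _ ≤ 2 * C * 2 ^ (N + 1) := by gcongr; exact sum_Icc_two_pow_le N
    _ = 4 * C * 2 ^ N := by ring

theorem exists_dyadic_between {Γ : ℝ} (hΓ0 : 0 < Γ) (hΓ1 : Γ ≤ 1) :
    ∃ N : ℕ, 2⁻¹ ^ N < Γ ∧ (2 : ℝ) ^ N ≤ 2 / Γ := by
  obtain ⟨n, hle, hlt⟩ := exists_nat_pow_near (one_le_one_div hΓ0 hΓ1) one_lt_two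
  refine ⟨n + 1, ?_, ?_⟩
  · rw [inv_pow, inv_lt_comm₀ (by positivity) hΓ0, ← one_div]
    exact hlt
  · rw [pow_succ, le_div_iff₀ hΓ0]
    rw [le_div_iff₀ hΓ0] at hle
    linarith

section Matrix

variable {n : Type*} [Fintype n] [DecidableEq n]

theorem Matrix.PosDef.dotProduct_inv_mulVec_le {A B : Matrix n n ℝ} (hA : A.PosDef)
    (hAB : (B - A).PosSemidef) (x : n → ℝ) :
    x ⬝ᵥ B⁻¹ *ᵥ x ≤ x ⬝ᵥ A⁻¹ *ᵥ x := by
  have hB : B.PosDef := by simpa using hA.add_posSemidef hAB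
  set y := B⁻¹ *ᵥ x
  set z := A⁻¹ *ᵥ x
  have hy : B *ᵥ y = x := by
    rw [mulVec_mulVec, mul_nonsing_inv _ hB.det_pos.ne'.isUnit, one_mulVec]
  have hz : A *ᵥ z = x := by
    rw [mulVec_mulVec, mul_nonsing_inv _ hA.det_pos.ne'.isUnit, one_mulVec]
  have hsymm : z ⬝ᵥ A *ᵥ y = x ⬝ᵥ y := by
    have hAt : Aᵀ = A := isHermitian_iff_isSymm.mp hA.isHermitian
    rw [dotProduct_mulVec, ← mulVec_transpose, hAt, hz]
  -- `x ⬝ z - x ⬝ y = (y - z) ⬝ A (y - z) + y ⬝ (B - A) y`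
  have hsq := hA.posSemidef.dotProduct_mulVec_nonneg (y - z)
  have hgap := hAB.dotProduct_mulVec_nonneg y
  simp only [star_trivial, sub_mulVec, mulVec_sub, dotProduct_sub, sub_dotProduct, hy, hz,
    hsymm] at hsq hgap
  linarith [dotProduct_comm x y, dotProduct_comm x z]

theorem Matrix.PosDef.det_add_vecMulVec_self {A : Matrix n n ℝ} (hA : A.PosDef) (v : n → ℝ) :
    (A + vecMulVec v v).det = A.det * (1 + v ⬝ᵥ A⁻¹ *ᵥ v) := by
  rw [vecMulVec_eq Unit, det_add_replicateCol_mul_replicateRow hA.det_pos.ne'.isUnit,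
    det_unique (1 + _)]
  simp [Matrix.mul_assoc, mul_apply, dotProduct, mulVec]

theorem Matrix.PosSemidef.det_le_trace_div_pow [Nonempty n] {A : Matrix n n ℝ}
    (hA : A.PosSemidef) : A.det ≤ (A.trace / Fintype.card n) ^ Fintype.card n := by
  rw [hA.isHermitian.det_eq_prod_eigenvalues, hA.isHermitian.trace_eq_sum_eigenvalues]
  simpa using Real.prod_le_arith_mean_pow hA.eigenvalues_nonneg

end Matrix

noncomputable def designMatrix {n ι : Type*} [Fintype n] [DecidableEq n] (lam : ℝ)
    (x : ι → n → ℝ) (s : Finset ι) : Matrix n n ℝ :=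
  lam • 1 + ∑ u ∈ s, vecMulVec (x u) (x u)

namespace designMatrix

variable {n ι : Type*} [Fintype n] [DecidableEq n] {lam L : ℝ}

section General

variable {x : ι → n → ℝ} {s s' : Finset ι}

theorem insert_eq [DecidableEq ι] {a : ι} (ha : a ∉ s) :
    designMatrix lam x (insert a s) = designMatrix lam x s + vecMulVec (x a) (x a) := by
  rw [designMatrix, designMatrix, sum_insert ha]
  abel

theorem sub_posSemidef (h : s ⊆ s') :
    (designMatrix lam x s' - designMatrix lam x s).PosSemidef := by
  rw [designMatrix, designMatrix, add_sub_add_left_eq_sub, ← sum_sdiff h, add_sub_cancel_right]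
  exact posSemidef_sum _ fun u _ ↦ by simpa using posSemidef_vecMulVec_self_star (x u)

theorem posDef (hlam : 0 < lam) : (designMatrix lam x s).PosDef := by
  simpa [designMatrix] using (PosDef.one.smul hlam).add_posSemidef
    (sub_posSemidef (lam := lam) (x := x) (empty_subset s))

theorem trace_eq :
    (designMatrix lam x s).trace = lam * Fintype.card n + ∑ u ∈ s, x u ⬝ᵥ x u := by
  simp [designMatrix, trace_sum, trace_vecMulVec]

theorem dotProduct_inv_mulVec_le (hlam : 0 < lam) (v : n → ℝ) :
    v ⬝ᵥ (designMatrix lam x s)⁻¹ *ᵥ v ≤ v ⬝ᵥ v / lam := by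
  have hinv : (lam • (1 : Matrix n n ℝ))⁻¹ = lam⁻¹ • 1 :=
    inv_eq_left_inv (by simp [smul_smul, hlam.ne'])
  calc v ⬝ᵥ (designMatrix lam x s)⁻¹ *ᵥ v
      ≤ v ⬝ᵥ (designMatrix lam x ∅)⁻¹ *ᵥ v :=
        (posDef (s := ∅) hlam).dotProduct_inv_mulVec_le (sub_posSemidef (empty_subset s)) v
    _ = v ⬝ᵥ v / lam := by
        simp [designMatrix, hinv, smul_mulVec, div_eq_inv_mul]

theorem det_le [Nonempty n] (hlam : 0 < lam) (hx : ∀ u ∈ s, x u ⬝ᵥ x u ≤ L ^ 2) :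
    (designMatrix lam x s).det ≤ (lam + #s * L ^ 2 / Fintype.card n) ^ Fintype.card n := by
  have hcard : (0 : ℝ) < Fintype.card n := by exact_mod_cast Fintype.card_pos
  refine (posDef hlam).posSemidef.det_le_trace_div_pow.trans ?_
  have htrace := (posDef (x := x) (s := s) hlam).posSemidef.trace_nonneg
  gcongr
  rw [trace_eq, add_div, mul_div_cancel_right₀ _ hcard.ne']
  gcongr
  simpa using sum_le_card_nsmul s _ _ hx

variable [LinearOrder ι] {b : ℝ}

theorem pow_mul_one_add_pow_le_det (hlam : 0 < lam) (hb : 0 ≤ b)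
    (hS : ∀ t ∈ s, b ≤ x t ⬝ᵥ (designMatrix lam x (s.filter (· < t)))⁻¹ *ᵥ x t) :
    lam ^ Fintype.card n * (1 + b) ^ #s ≤ (designMatrix lam x s).det := by
  induction s using Finset.induction_on_max with
  | empty => simp [designMatrix]
  | insert a s hmax ih =>
    have ha : a ∉ s := fun h ↦ (hmax a h).false
    have hfilter_a : (insert a s).filter (· < a) = s := by
      ext t
      simp only [mem_filter, mem_insert]
      exact ⟨fun ⟨h, hlt⟩ ↦ h.resolve_left hlt.ne, fun h ↦ ⟨Or.inr h, hmax t h⟩⟩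
    have hfilter_t : ∀ t ∈ s, (insert a s).filter (· < t) = s.filter (· < t) := by
      intro t ht
      rw [filter_insert, if_neg (hmax t ht).not_gt]
    rw [insert_eq ha, (posDef hlam).det_add_vecMulVec_self, card_insert_of_notMem ha, pow_succ,
      ← mul_assoc]
    have hdet := ih fun t ht ↦ hfilter_t t ht ▸ hS t (mem_insert_of_mem ht)
    have hquad := hfilter_a ▸ hS a (mem_insert_self a s)
    gcongr
    exact (by positivity : (0 : ℝ) ≤ _).trans hdet

variable [Nonempty n]

theorem card_mul_log_one_add_le (hlam : 0 < lam) (hb : 0 ≤ b)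
    (hx : ∀ u ∈ s, x u ⬝ᵥ x u ≤ L ^ 2)
    (hS : ∀ t ∈ s, b ≤ x t ⬝ᵥ (designMatrix lam x (s.filter (· < t)))⁻¹ *ᵥ x t) :
    #s * Real.log (1 + b) ≤
      Fintype.card n * Real.log (1 + #s * L ^ 2 / (Fintype.card n * lam)) := by
  have hcard : (0 : ℝ) < Fintype.card n := by exact_mod_cast Fintype.card_pos
  have hpow : (1 + b) ^ #s ≤ (1 + #s * L ^ 2 / (Fintype.card n * lam)) ^ Fintype.card n := by
    have hdet := (pow_mul_one_add_pow_le_det hlam hb hS).trans (det_le hlam hx)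
    rwa [show lam + #s * L ^ 2 / Fintype.card n =
        lam * (1 + #s * L ^ 2 / (Fintype.card n * lam)) by field_simp,
      mul_pow, mul_le_mul_iff_right₀ (by positivity)] at hdet
  simpa only [Real.log_pow] using Real.log_le_log (by positivity) hpow

theorem card_le (hlam : 0 < lam) (hb : 0 < b) (hb2 : b ≤ 2)
    (hx : ∀ u ∈ s, x u ⬝ᵥ x u ≤ L ^ 2)
    (hS : ∀ t ∈ s, b ≤ x t ⬝ᵥ (designMatrix lam x (s.filter (· < t)))⁻¹ *ᵥ x t) :
    #s ≤ 6 * Fintype.card n / b * Real.log (1 + 2 * L ^ 2 / (b * lam)) := by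
  rcases s.eq_empty_or_nonempty with rfl | ⟨t, ht⟩
  · simpa using mul_nonneg (by positivity) (Real.log_nonneg (by simp; positivity))
  have hcard : (0 : ℝ) < Fintype.card n := by exact_mod_cast Fintype.card_pos
  have hbL : b * lam ≤ L ^ 2 := by
    have := (hS t ht).trans (dotProduct_inv_mulVec_le hlam (x t))
    rw [le_div_iff₀ hlam] at this
    exact this.trans (hx t ht)
  have hlog_b : b / 2 ≤ Real.log (1 + b) := by
    refine le_trans ?_ (Real.le_log_one_add_of_nonneg hb.le)
    rw [div_le_div_iff₀ (by norm_num) (by linarith)]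
    nlinarith
  -- with `r = #s b / 2d` and `c = 2L² / bλ`, the bound reads `r ≤ log (1 + r c)`
  set r : ℝ := #s * b / (2 * Fintype.card n)
  set c : ℝ := 2 * L ^ 2 / (b * lam)
  have hc : 2 ≤ c := by rw [le_div_iff₀ (by positivity)]; linarith
  have hrc : r ≤ Real.log (1 + r * c) := by
    have hmain := card_mul_log_one_add_le hlam hb.le hx hS
    rw [show #s * L ^ 2 / (Fintype.card n * lam) = r * c by simp only [r, c]; field_simp]
      at hmain
    have : Fintype.card n * r ≤ Fintype.card n * Real.log (1 + r * c) := by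
      calc Fintype.card n * r = #s * (b / 2) := by simp only [r]; field_simp
        _ ≤ #s * Real.log (1 + b) := by gcongr
        _ ≤ _ := hmain
    exact le_of_mul_le_mul_left this hcard
  have hr := Real.le_three_mul_log_one_add_of_le_log_s15 (by positivity) hc hrc
  calc (#s : ℝ) = 2 * Fintype.card n / b * r := by simp only [r]; field_simp
    _ ≤ 2 * Fintype.card n / b * (3 * Real.log (1 + c)) := by gcongr
    _ = _ := by ring

end General

theorem eq_Icc_of_succ {x : ℕ → n → ℝ} {V : ℕ → Matrix n n ℝ} (hV0 : V 0 = lam • 1)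
    (hV : ∀ t, V (t + 1) = V t + vecMulVec (x (t + 1)) (x (t + 1))) (t : ℕ) :
    V t = designMatrix lam x (Icc 1 t) := by
  induction t with
  | zero => simp [hV0, designMatrix]
  | succ t ih =>
    rw [hV, ih, ← insert_Icc_right_eq_Icc_add_one (by omega), insert_eq (by simp)]

variable [Nonempty n] {x : ℕ → n → ℝ} {s : Finset ℕ}

theorem card_le_of_Icc (hlam : 0 < lam) {b : ℝ} (hb : 0 < b) (hb2 : b ≤ 2)
    (hs0 : 0 ∉ s) (hx : ∀ t ∈ s, x t ⬝ᵥ x t ≤ L ^ 2)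
    (hS : ∀ t ∈ s, b ≤ x t ⬝ᵥ (designMatrix lam x (Icc 1 (t - 1)))⁻¹ *ᵥ x t) :
    #s ≤ 6 * Fintype.card n / b * Real.log (1 + 2 * L ^ 2 / (b * lam)) := by
  refine card_le hlam hb hb2 hx fun t ht ↦ (hS t ht).trans ?_
  refine (posDef hlam).dotProduct_inv_mulVec_le (sub_posSemidef fun u hu ↦ ?_) (x t)
  have hu0 : u ≠ 0 := fun h ↦ hs0 (h ▸ (mem_filter.mp hu).1)
  have hut := (mem_filter.mp hu).2
  simp only [mem_Icc]
  omega

variable {κ Γ : ℝ} {f : ℕ → ℝ}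

-- on the level `f t > 2⁻ˡ` the elliptical potentials are at least `b = 4⁻ˡ / κ`
theorem card_filter_dyadic_le (hlam : 0 < lam) (hκ : 1 ≤ κ) (hΓ0 : 0 < Γ) (hs0 : 0 ∉ s)
    (hx : ∀ t ∈ s, x t ⬝ᵥ x t ≤ L ^ 2)
    (hS : ∀ t ∈ s, f t ^ 2 ≤ κ * x t ⬝ᵥ (designMatrix lam x (Icc 1 (t - 1)))⁻¹ *ᵥ x t)
    {l : ℕ} (h2l : (2 : ℝ) ^ l ≤ 2 / Γ) :
    (#(s.filter (2⁻¹ ^ l < f ·)) : ℝ) ≤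
      6 * Fintype.card n * κ * Real.log (1 + 8 * L ^ 2 * κ / (lam * Γ ^ 2)) * 4 ^ l := by
  have h4l : (4 : ℝ) ^ l = (2 ^ l) ^ 2 := by rw [← pow_mul, mul_comm, pow_mul]; norm_num
  set b : ℝ := (4 ^ l * κ)⁻¹
  have hb0 : 0 < b := by positivity
  have hb1 : b ≤ 1 :=
    inv_le_one_of_one_le₀ (one_le_mul_of_one_le_of_one_le (one_le_pow₀ (by norm_num)) hκ)
  have hlevel : ∀ t ∈ s.filter (2⁻¹ ^ l < f ·),
      b ≤ x t ⬝ᵥ (designMatrix lam x (Icc 1 (t - 1)))⁻¹ *ᵥ x t := by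
    intro t ht
    obtain ⟨hts, hlt⟩ := mem_filter.mp ht
    have hsq : (4 ^ l)⁻¹ ≤ f t ^ 2 := by
      rw [h4l, ← inv_pow, ← inv_pow]
      gcongr
    calc b = (4 ^ l)⁻¹ / κ := by simp only [b, mul_inv, div_eq_mul_inv]
      _ ≤ f t ^ 2 / κ := by gcongr
      _ ≤ _ := by rw [div_le_iff₀ (by positivity), mul_comm]; exact hS t hts
  have harg : 2 * L ^ 2 / (b * lam) ≤ 8 * L ^ 2 * κ / (lam * Γ ^ 2) := by
    have h4l_le : (4 : ℝ) ^ l ≤ 4 / Γ ^ 2 := by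
      rw [h4l, show 4 / Γ ^ 2 = (2 / Γ) ^ 2 by ring]
      gcongr
    calc 2 * L ^ 2 / (b * lam) = 2 * L ^ 2 * κ * 4 ^ l / lam := by
          simp only [b]; field_simp
      _ ≤ 2 * L ^ 2 * κ * (4 / Γ ^ 2) / lam := by gcongr
      _ = _ := by field_simp; ring
  calc _ ≤ 6 * Fintype.card n / b * Real.log (1 + 2 * L ^ 2 / (b * lam)) :=
        card_le_of_Icc hlam hb0 (by linarith) (fun h ↦ hs0 (mem_filter.mp h).1)
          (fun t ht ↦ hx t (mem_filter.mp ht).1) hlevel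
    _ ≤ 6 * Fintype.card n / b * Real.log (1 + 8 * L ^ 2 * κ / (lam * Γ ^ 2)) := by gcongr
    _ = _ := by simp only [b]; field_simp

theorem sum_le_of_sq_le_mul_dotProduct_inv (hlam : 0 < lam) (hκ : 1 ≤ κ) (hΓ0 : 0 < Γ)
    (hΓ1 : Γ ≤ 1) (hs0 : 0 ∉ s) (hx : ∀ t ∈ s, x t ⬝ᵥ x t ≤ L ^ 2)
    (hf : ∀ t ∈ s, Γ < f t ∧ f t ≤ 1)
    (hS : ∀ t ∈ s, f t ^ 2 ≤ κ * x t ⬝ᵥ (designMatrix lam x (Icc 1 (t - 1)))⁻¹ *ᵥ x t) :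
    ∑ t ∈ s, f t ≤
      48 * Fintype.card n * κ / Γ * Real.log (1 + 8 * L ^ 2 * κ / (lam * Γ ^ 2)) := by
  have hA : 0 ≤ Real.log (1 + 8 * L ^ 2 * κ / (lam * Γ ^ 2)) :=
    Real.log_nonneg (by simp only [le_add_iff_nonneg_right]; positivity)
  obtain ⟨N, hNΓ, hN⟩ := exists_dyadic_between hΓ0 hΓ1
  calc ∑ t ∈ s, f t
      ≤ 4 * (6 * Fintype.card n * κ * Real.log (1 + 8 * L ^ 2 * κ / (lam * Γ ^ 2))) * 2 ^ N :=
        sum_le_of_card_dyadic_superlevel_le s f N (by positivity)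
          (fun t ht ↦ ⟨hNΓ.trans (hf t ht).1, (hf t ht).2⟩) fun l hl ↦
          card_filter_dyadic_le hlam hκ hΓ0 hs0 hx hS
            ((pow_le_pow_right₀ one_le_two (mem_Icc.mp hl).2).trans hN)
    _ ≤ 4 * (6 * Fintype.card n * κ * Real.log (1 + 8 * L ^ 2 * κ / (lam * Γ ^ 2))) * (2 / Γ) := by
        gcongr
    _ = _ := by ring

end designMatrix

theorem dotProduct_self_le_sq_of_enorm2_le {d : ℕ} {v : Fin d → ℝ} {L : ℝ} (h : enorm2 v ≤ L) :
    v ⬝ᵥ v ≤ L ^ 2 := by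
  rw [← Real.sq_sqrt (show 0 ≤ v ⬝ᵥ v by simpa using dotProduct_star_self_nonneg v)]
  exact pow_le_pow_left₀ (Real.sqrt_nonneg _) h 2

theorem sum_mul_ite_le {ι : Type*} (s : Finset ι) (f : ι → ℝ) (p : ι → Prop) [DecidablePred p]
    (hf : ∀ i ∈ s, 0 ≤ f i) {Γ : ℝ} (hΓ : 0 ≤ Γ) :
    ∑ i ∈ s, f i * (if p i then 1 else 0) ≤
      #s * Γ + ∑ i ∈ s.filter (fun i ↦ Γ < f i ∧ p i), f i := by
  rw [sum_filter, ← nsmul_eq_mul, ← sum_const, ← sum_add_distrib]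
  refine sum_le_sum fun i hi ↦ ?_
  have := hf i hi
  split_ifs <;> grind

theorem peeling_bound_log_general (d T : ℕ) (hd : 1 ≤ d) (hT : 3 ≤ T) (lam L : ℝ)
    (hlam : 0 < lam)
    (X : ℕ → Fin d → ℝ) (hX : ∀ t ∈ Finset.Icc 1 T, enorm2 (X t) ≤ L)
    (V : ℕ → Matrix (Fin d) (Fin d) ℝ)
    (hV0 : V 0 = lam • (1 : Matrix (Fin d) (Fin d) ℝ))
    (hV : ∀ t, V (t + 1) = V t + Matrix.vecMulVec (X (t + 1)) (X (t + 1)))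
    (Δ : ℕ → ℝ) (hΔ : ∀ t ∈ Finset.Icc 1 T, Δ t ∈ Set.Icc (0 : ℝ) 1)
    (β : ℕ → ℝ) (hβ0 : 1 ≤ β 0)
    (hβmono : ∀ s t : ℕ, s ≤ t → t ≤ T - 1 → β s ≤ β t)
    (Γ : ℝ) (hΓ0 : 0 < Γ) (hΓ1 : Γ < 1) :
    ∑ t ∈ Finset.Icc 1 T,
        Δ t * (if Δ t ^ 2 / (β (t - 1) * Real.log T) ≤ X t ⬝ᵥ (V (t - 1))⁻¹.mulVec (X t)
          then (1 : ℝ) else 0)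
      ≤ T * Γ + (48 * d * β (T - 1) * Real.log T / Γ) *
          Real.log (1 + 8 * L ^ 2 * β (T - 1) * Real.log T / (lam * Γ ^ 2)) := by
  have : Nonempty (Fin d) := ⟨⟨0, hd⟩⟩
  have hlogT : 1 ≤ Real.log T := by
    rw [Real.le_log_iff_exp_le (by positivity)]
    exact Real.exp_one_lt_three.le.trans (by exact_mod_cast hT)
  have hβ : ∀ t ∈ Icc 1 T, 0 < β (t - 1) ∧ β (t - 1) ≤ β (T - 1) := fun t ht ↦ by
    have : t - 1 ≤ T - 1 := by have := (mem_Icc.mp ht).2; omega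
    exact ⟨by linarith [hβmono 0 (t - 1) (Nat.zero_le _) this], hβmono _ _ this le_rfl⟩
  have hκ : 1 ≤ β (T - 1) * Real.log T := by
    nlinarith [hβmono 0 (T - 1) (Nat.zero_le _) le_rfl]
  refine (sum_mul_ite_le _ _ _ (fun t ht ↦ (hΔ t ht).1) hΓ0.le).trans ?_
  rw [Nat.card_Icc, Nat.add_sub_cancel]
  gcongr
  refine (designMatrix.sum_le_of_sq_le_mul_dotProduct_inv (x := X) (L := L) hlam hκ hΓ0 hΓ1.le
    (by simp) (fun t ht ↦ ?_) (fun t ht ↦ ?_) fun t ht ↦ ?_).trans_eq (by simp [mul_assoc])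
  all_goals obtain ⟨ht, hΓΔ, hcond⟩ := mem_filter.mp ht
  · exact dotProduct_self_le_sq_of_enorm2_le (hX t ht)
  · exact ⟨hΓΔ, (hΔ t ht).2⟩
  · have hpos : 0 < β (t - 1) * Real.log T := mul_pos (hβ t ht).1 (by linarith)
    have hq : 0 ≤ X t ⬝ᵥ (V (t - 1))⁻¹ *ᵥ X t := (div_nonneg (sq_nonneg _) hpos.le).trans hcond
    rw [div_le_iff₀ hpos, mul_comm] at hcond
    rw [← designMatrix.eq_Icc_of_succ hV0 hV]
    exact hcond.trans (by gcongr; exact (hβ t ht).2)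

/-- **Deterministic peeling bound with a logarithmic factor.** With `V_0 = λ·I_d`,
`V_t = V_{t−1} + X_t X_tᵀ`, `‖X_t‖ ≤ L`, gaps `Δ_t ∈ [0,1]`, and a nondecreasing sequence
`β_0 ≤ … ≤ β_{T−1}` with `β_0 ≥ 1` (write `β := β_{T−1}`), for every `Γ ∈ (0,1)`:
`Σ_{t=1}^T Δ_t·1{‖X_t‖²_{V_{t−1}⁻¹} ≥ Δ_t²/(β_{t−1}·log T)}
  ≤ T·Γ + (48dβ·log T/Γ)·log(1 + 8L²β·log T/(λΓ²))`. -/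
theorem peeling_bound_log (d T : ℕ) (hd : 1 ≤ d) (hT : 3 ≤ T) (lam L : ℝ)
    (hlam : 0 < lam) (hL : 0 < L)
    (X : ℕ → Fin d → ℝ) (hX : ∀ t ∈ Finset.Icc 1 T, enorm2 (X t) ≤ L)
    (V : ℕ → Matrix (Fin d) (Fin d) ℝ)
    (hV0 : V 0 = lam • (1 : Matrix (Fin d) (Fin d) ℝ))
    (hV : ∀ t, V (t + 1) = V t + Matrix.vecMulVec (X (t + 1)) (X (t + 1)))
    (Δ : ℕ → ℝ) (hΔ : ∀ t ∈ Finset.Icc 1 T, Δ t ∈ Set.Icc (0 : ℝ) 1)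
    (β : ℕ → ℝ) (hβ0 : 1 ≤ β 0)
    (hβmono : ∀ s t : ℕ, s ≤ t → t ≤ T - 1 → β s ≤ β t)
    (Γ : ℝ) (hΓ0 : 0 < Γ) (hΓ1 : Γ < 1) :
    ∑ t ∈ Finset.Icc 1 T,
        Δ t * (if Δ t ^ 2 / (β (t - 1) * Real.log T) ≤ X t ⬝ᵥ (V (t - 1))⁻¹.mulVec (X t)
          then (1 : ℝ) else 0)
      ≤ T * Γ + (48 * d * β (T - 1) * Real.log T / Γ) *
          Real.log (1 + 8 * L ^ 2 * β (T - 1) * Real.log T / (lam * Γ ^ 2)) :=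
  peeling_bound_log_general d T hd hT lam L hlam X hX V hV0 hV Δ hΔ β hβ0 hβmono Γ hΓ0 hΓ1
end

section
/- Let q ∈ ℕ with q ≥ 1, and let u, v, δ > 0 be real numbers such that log(1/u) ≤ q²·δ²/(4v) + log(1/v) and v ≥ (q+1)²·δ²/4. Then u ≥ ((q+1)²·δ²/4)·exp(−q²/(q+1)²). -/
/-!
Exponentiating the hypothesis gives `v · exp(-c/v) ≤ u` with `c = q²δ²/4`. The map
`v ↦ v · exp(-c/v)` is nondecreasing for `c ≥ 0`, so its value at `v` dominates its value at
`v₀ = (q+1)²δ²/4`, which is `v₀ · exp(-q²/(q+1)²)`.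
-/

open Real

theorem mul_exp_neg_div_le_mul_exp_neg_div {c a b : ℝ} (hc : 0 ≤ c) (ha : 0 < a) (hab : a ≤ b) :
    a * exp (-(c / a)) ≤ b * exp (-(c / b)) := by
  have hdiv : c / b ≤ c / a := div_le_div_of_nonneg_left hc ha hab
  exact mul_le_mul hab (exp_le_exp.mpr (neg_le_neg hdiv)) (exp_pos _).le (ha.le.trans hab)

theorem mul_exp_neg_div_le_of_log_inv_le {c u v : ℝ} (hu : 0 < u) (hv : 0 < v)
    (h : log (1 / u) ≤ c / v + log (1 / v)) : v * exp (-(c / v)) ≤ u := by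
  rw [one_div, one_div, log_inv, log_inv] at h
  calc v * exp (-(c / v)) = exp (log v - c / v) := by
        rw [exp_sub, exp_log hv, exp_neg, ← div_eq_mul_inv]
    _ ≤ exp (log u) := exp_le_exp.mpr (by linarith)
    _ = u := exp_log hu

theorem f3_key_step_general (q : ℕ) (u v δ : ℝ) (hu : 0 < u) (hv : 0 < v) (hδ : 0 < δ)
    (h1 : Real.log (1 / u) ≤ (q : ℝ) ^ 2 * δ ^ 2 / (4 * v) + Real.log (1 / v))
    (h2 : ((q : ℝ) + 1) ^ 2 * δ ^ 2 / 4 ≤ v) :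
    (((q : ℝ) + 1) ^ 2 * δ ^ 2 / 4) * Real.exp (-(q : ℝ) ^ 2 / ((q : ℝ) + 1) ^ 2) ≤ u := by
  set c : ℝ := (q : ℝ) ^ 2 * δ ^ 2 / 4
  set v₀ : ℝ := ((q : ℝ) + 1) ^ 2 * δ ^ 2 / 4
  have hv₀ : 0 < v₀ := by positivity
  have hratio : -(q : ℝ) ^ 2 / ((q : ℝ) + 1) ^ 2 = -(c / v₀) := by
    simp only [c, v₀]
    field_simp
  have hc_div : (q : ℝ) ^ 2 * δ ^ 2 / (4 * v) = c / v := by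
    simp only [c]
    field_simp
  rw [hc_div] at h1
  rw [hratio]
  calc v₀ * exp (-(c / v₀)) ≤ v * exp (-(c / v)) :=
        mul_exp_neg_div_le_mul_exp_neg_div (by positivity) hv₀ h2
    _ ≤ u := mul_exp_neg_div_le_of_log_inv_le hu hv h1

/-- Key elementary step in the `F₃` bound for LinIMED-1: if
`log(1/u) ≤ q²δ²/(4v) + log(1/v)` and `v ≥ (q+1)²δ²/4`, then
`u ≥ ((q+1)²δ²/4)·exp(−q²/(q+1)²)`. -/
theorem f3_key_step (q : ℕ) (hq : 1 ≤ q) (u v δ : ℝ) (hu : 0 < u) (hv : 0 < v) (hδ : 0 < δ)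
    (h1 : Real.log (1 / u) ≤ (q : ℝ) ^ 2 * δ ^ 2 / (4 * v) + Real.log (1 / v))
    (h2 : ((q : ℝ) + 1) ^ 2 * δ ^ 2 / 4 ≤ v) :
    (((q : ℝ) + 1) ^ 2 * δ ^ 2 / 4) * Real.exp (-(q : ℝ) ^ 2 / ((q : ℝ) + 1) ^ 2) ≤ u :=
  f3_key_step_general q u v δ hu hv hδ h1 h2
end

section
/- Let q ∈ ℕ with q ≥ 1, let T ≥ 1 be real, and let δ, v > 0 be real numbers such that log T ≤ q²·δ²/(4v) + log(1/v) and v ≥ (q+1)²·δ²/4. Then δ ≤ 2·exp(q²/(2(q+1)²)) / ((q+1)·√T). -/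
/-!
Exponentiating the first hypothesis gives `T ≤ exp (c / v) / v` with `c = q²δ²/4`. Since
`v ↦ exp (c / v) / v` is decreasing, `v` may be replaced by its lower bound `(q+1)²δ²/4`, at
which `c / v = q²/(q+1)²`; solving the resulting inequality for `δ` gives the claim.
-/

open Real Set

theorem le_exp_div_of_log_le {T c v : ℝ} (hT : 0 < T) (hv : 0 < v)
    (h : log T ≤ c / v + log (1 / v)) : T ≤ exp (c / v) / v := by
  have := exp_le_exp.2 h
  rwa [exp_log hT, exp_add, exp_log (one_div_pos.2 hv), mul_one_div] at this

theorem antitoneOn_exp_div_div {c : ℝ} (hc : 0 ≤ c) :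
    AntitoneOn (fun v => exp (c / v) / v) (Ioi 0) := by
  intro a ha b _ hab
  exact div_le_div₀ (exp_pos _).le (exp_le_exp.2 (div_le_div_of_nonneg_left hc ha hab)) ha hab

theorem le_div_sqrt_of_sq_mul_le {a b T : ℝ} (hb : 0 ≤ b) (hT : 0 < T)
    (h : a ^ 2 * T ≤ b ^ 2) : a ≤ b / √T := by
  rw [le_div_iff₀ (sqrt_pos.2 hT)]
  calc a * √T ≤ √(a ^ 2 * T) := by
        rw [sqrt_mul (sq_nonneg a), sqrt_sq_eq_abs]
        exact mul_le_mul_of_nonneg_right (le_abs_self a) (sqrt_nonneg T)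
    _ ≤ √(b ^ 2) := sqrt_le_sqrt h
    _ = b := sqrt_sq hb

theorem f3_key_step_logT_general (q : ℕ) (T δ v : ℝ) (hT : 1 ≤ T) (hδ : 0 < δ)
    (hv : 0 < v)
    (h1 : Real.log T ≤ (q : ℝ) ^ 2 * δ ^ 2 / (4 * v) + Real.log (1 / v))
    (h2 : ((q : ℝ) + 1) ^ 2 * δ ^ 2 / 4 ≤ v) :
    δ ≤ 2 * Real.exp ((q : ℝ) ^ 2 / (2 * ((q : ℝ) + 1) ^ 2)) / (((q : ℝ) + 1) * Real.sqrt T) := by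
  have hk : 0 < (q : ℝ) + 1 := by positivity
  generalize (q : ℝ) + 1 = k at hk h2 ⊢
  have hT0 : 0 < T := one_pos.trans_le hT
  have hv₀ : 0 < k ^ 2 * δ ^ 2 / 4 := by positivity
  have hT_le : T ≤ exp (q ^ 2 / k ^ 2) / (k ^ 2 * δ ^ 2 / 4) := by
    have hc : q ^ 2 * δ ^ 2 / (4 * v) = q ^ 2 * δ ^ 2 / 4 / v := by ring
    rw [hc] at h1
    have hx : q ^ 2 * δ ^ 2 / 4 / (k ^ 2 * δ ^ 2 / 4) = q ^ 2 / k ^ 2 := by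
      field_simp
    have hanti : exp (q ^ 2 * δ ^ 2 / 4 / v) / v ≤
        exp (q ^ 2 * δ ^ 2 / 4 / (k ^ 2 * δ ^ 2 / 4)) / (k ^ 2 * δ ^ 2 / 4) :=
      antitoneOn_exp_div_div (by positivity) hv₀ hv h2
    rw [hx] at hanti
    exact (le_exp_div_of_log_le hT0 hv h1).trans hanti
  have hsq : (k * δ / 2) ^ 2 * T ≤ exp (q ^ 2 / (2 * k ^ 2)) ^ 2 :=
    calc (k * δ / 2) ^ 2 * T = T * (k ^ 2 * δ ^ 2 / 4) := by ring
      _ ≤ exp (q ^ 2 / k ^ 2) := (le_div_iff₀ hv₀).1 hT_le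
      _ = exp (q ^ 2 / (2 * k ^ 2)) ^ 2 := by rw [← exp_nat_mul]; congr 1; push_cast; ring
  calc δ = 2 * (k * δ / 2) / k := by field_simp
    _ ≤ 2 * (exp (q ^ 2 / (2 * k ^ 2)) / √T) / k := by
        gcongr 2 * ?_ / k
        exact le_div_sqrt_of_sq_mul_le (exp_pos _).le hT0 hsq
    _ = _ := by ring

/-- Key elementary step in the `F₃` bound for LinIMED-2 (case where the index of the chosen
arm equals `log T`): if `log T ≤ q²δ²/(4v) + log(1/v)` and `v ≥ (q+1)²δ²/4`, then
`δ ≤ 2·exp(q²/(2(q+1)²)) / ((q+1)·√T)`. -/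
theorem f3_key_step_logT (q : ℕ) (hq : 1 ≤ q) (T δ v : ℝ) (hT : 1 ≤ T) (hδ : 0 < δ)
    (hv : 0 < v)
    (h1 : Real.log T ≤ (q : ℝ) ^ 2 * δ ^ 2 / (4 * v) + Real.log (1 / v))
    (h2 : ((q : ℝ) + 1) ^ 2 * δ ^ 2 / 4 ≤ v) :
    δ ≤ 2 * Real.exp ((q : ℝ) ^ 2 / (2 * ((q : ℝ) + 1) ^ 2)) / (((q : ℝ) + 1) * Real.sqrt T) :=
  f3_key_step_logT_general q T δ v hT hδ hv h1 h2
end
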